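/- Let μ ∈ ℝ, σ > 0, λ a positive integer, and r ≥ 1 an integer. Let X_τ (τ ∈ {1,…,r}) be mutually independent real random variables with X_τ ~ N(μ, σ²/(τλ)), and set μ̂ = Σ_{τ=1}^r (2τ/(r(r+1)))·X_τ. Then for every ε > 0, P(|μ̂ − μ| ≥ ε) ≤ 2·exp(−ε²·λ·r·(r+1)/(4σ²)). -/

import Mathlib

/-!
Each `X τ - μ` is centred Gaussian, hence sub-Gaussian with variance proxy `σ² / (τλ)`. The weights
sum to one, so `μ̂ - μ = Σ w_τ (X τ - μ)`, and by independence this is sub-Gaussian with proxy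
`Σ w_τ² σ² / (τλ) = 2σ² / (λ r (r + 1))`. The Chernoff bound on both tails gives the claim.
-/

open MeasureTheory ProbabilityTheory Real
open scoped NNReal

lemma sum_fin_val_add_one (n : ℕ) : ∑ i : Fin n, ((i : ℕ) + 1 : ℝ) = n * (n + 1) / 2 := by
  induction n with
  | zero => simp
  | succ n ih =>
    simp only [Fin.sum_univ_castSucc, Fin.val_castSucc, Fin.val_last, ih]
    push_cast
    ring

lemma sum_linear_weights {r : ℕ} (hr : r ≠ 0) :
    ∑ i : Fin r, 2 * ((i : ℕ) + 1 : ℝ) / ((r : ℝ) * ((r : ℝ) + 1)) = 1 := by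
  rw [← Finset.sum_div, ← Finset.mul_sum, sum_fin_val_add_one]
  field_simp

lemma sum_sq_linear_weights_mul {r : ℕ} (hr : r ≠ 0) (a : ℝ) :
    ∑ i : Fin r, (2 * ((i : ℕ) + 1 : ℝ) / ((r : ℝ) * ((r : ℝ) + 1))) ^ 2 * (a / ((i : ℕ) + 1 : ℝ))
      = 2 * a / ((r : ℝ) * ((r : ℝ) + 1)) := by
  have h_term : ∀ i : Fin r,
      (2 * ((i : ℕ) + 1 : ℝ) / ((r : ℝ) * ((r : ℝ) + 1))) ^ 2 * (a / ((i : ℕ) + 1 : ℝ))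
        = ((i : ℕ) + 1 : ℝ) * (4 * a / ((r : ℝ) * ((r : ℝ) + 1)) ^ 2) := by
    intro i
    field_simp
    ring
  rw [Finset.sum_congr rfl fun i _ ↦ h_term i, ← Finset.sum_mul, sum_fin_val_add_one]
  field_simp
  ring

namespace ProbabilityTheory

variable {Ω : Type*} [MeasurableSpace Ω] {P : Measure Ω}

lemma hasSubgaussianMGF_id_gaussianReal_zero (v : ℝ≥0) :
    HasSubgaussianMGF id v (gaussianReal 0 v) where
  integrable_exp_mul := integrable_exp_mul_gaussianReal
  mgf_le t := by simp [mgf_id_gaussianReal]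

lemma HasLaw.hasSubgaussianMGF_sub_of_gaussianReal {X : Ω → ℝ} {m : ℝ} {v : ℝ≥0}
    (hX : HasLaw X (gaussianReal m v) P) : HasSubgaussianMGF (fun ω ↦ X ω - m) v P := by
  have hX₀ := gaussianReal_sub_const hX m
  rw [sub_self] at hX₀
  rw [← HasSubgaussianMGF.id_map_iff hX₀.aemeasurable, hX₀.map_eq]
  exact hasSubgaussianMGF_id_gaussianReal_zero v

lemma HasSubgaussianMGF.measureReal_abs_ge_le {X : Ω → ℝ} {c : ℝ≥0}
    (h : HasSubgaussianMGF X c P) {ε : ℝ} (hε : 0 ≤ ε) :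
    P.real {ω | ε ≤ |X ω|} ≤ 2 * exp (-ε ^ 2 / (2 * c)) := by
  have h_split : {ω | ε ≤ |X ω|} = {ω | ε ≤ X ω} ∪ {ω | ε ≤ (-X) ω} := by
    ext ω
    simp [le_abs]
  calc P.real {ω | ε ≤ |X ω|}
      ≤ P.real {ω | ε ≤ X ω} + P.real {ω | ε ≤ (-X) ω} := h_split ▸ measureReal_union_le _ _
    _ ≤ 2 * exp (-ε ^ 2 / (2 * c)) := by
      rw [two_mul]
      exact add_le_add (h.measure_ge_le hε) (h.neg.measure_ge_le hε)

lemma HasSubgaussianMGF.weighted_sum_sub_of_iIndepFun {ι : Type*} {X : ι → Ω → ℝ}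
    (h_indep : iIndepFun X P)
    {s : Finset ι} {w : ι → ℝ} (hw : ∑ i ∈ s, w i = 1) {m : ℝ} {v : ι → ℝ≥0} {c : ℝ≥0}
    (hc : ∑ i ∈ s, w i ^ 2 * v i = c)
    (h : ∀ i ∈ s, HasSubgaussianMGF (fun ω ↦ X i ω - m) (v i) P) :
    HasSubgaussianMGF (fun ω ↦ ∑ i ∈ s, w i * X i ω - m) c P := by
  have h_indep' : iIndepFun (fun i ω ↦ w i * (X i ω - m)) P :=
    h_indep.comp (fun i x ↦ w i * (x - m)) (fun i ↦ by fun_prop)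
  convert! sum_of_iIndepFun h_indep' (fun i hi ↦ (h i hi).const_mul (w i)) using 2 with ω
  · simp only [mul_sub, Finset.sum_sub_distrib, ← Finset.sum_mul, hw, one_mul]
  · ext
    rw [← hc, NNReal.coe_sum]
    rfl

end ProbabilityTheory

theorem weighted_mean_tail_bound_general
    {Ω : Type*} [MeasurableSpace Ω] (P : Measure Ω) [IsProbabilityMeasure P]
    (μ σ : ℝ) (lam r : ℕ) (hr : 1 ≤ r)
    (X : Fin r → Ω → ℝ)
    (hXmeas : ∀ i, Measurable (X i))
    (hXdist : ∀ i : Fin r, P.map (X i) =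
      gaussianReal μ (Real.toNNReal (σ ^ 2 / (((i : ℕ) + 1 : ℝ) * (lam : ℝ)))))
    (hXindep : iIndepFun X P)
    (muhat : Ω → ℝ)
    (hmuhat : ∀ ω, muhat ω = ∑ i : Fin r,
        (2 * ((i : ℕ) + 1 : ℝ) / ((r : ℝ) * ((r : ℝ) + 1))) * X i ω)
    (ε : ℝ) (hε : 0 < ε) :
    P {ω | ε ≤ |muhat ω - μ|} ≤
      ENNReal.ofReal (2 * Real.exp (-(ε ^ 2 * (lam : ℝ) * (r : ℝ) * ((r : ℝ) + 1)) / (4 * σ ^ 2))) := by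
  have hr₀ : r ≠ 0 := Nat.one_le_iff_ne_zero.mp hr
  have h_var : ∑ i : Fin r, (2 * ((i : ℕ) + 1 : ℝ) / ((r : ℝ) * ((r : ℝ) + 1))) ^ 2
      * (Real.toNNReal (σ ^ 2 / (((i : ℕ) + 1 : ℝ) * (lam : ℝ))) : ℝ)
        = (Real.toNNReal (2 * (σ ^ 2 / lam) / ((r : ℝ) * ((r : ℝ) + 1))) : ℝ) := by
    rw [Real.coe_toNNReal _ (by positivity), ← sum_sq_linear_weights_mul hr₀]
    refine Finset.sum_congr rfl fun i _ ↦ ?_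
    rw [Real.coe_toNNReal _ (by positivity), div_mul_eq_div_div_swap (σ ^ 2)]
  have h_subG := HasSubgaussianMGF.weighted_sum_sub_of_iIndepFun hXindep
    (sum_linear_weights hr₀) h_var
    fun i _ ↦ HasLaw.hasSubgaussianMGF_sub_of_gaussianReal ⟨(hXmeas i).aemeasurable, hXdist i⟩
  have h_tail := h_subG.measureReal_abs_ge_le hε.le
  rw [Real.coe_toNNReal _ (by positivity)] at h_tail
  simp only [← hmuhat] at h_tail
  rw [← ofReal_measureReal]
  refine ENNReal.ofReal_le_ofReal (h_tail.trans_eq ?_)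
  congr 2
  field_simp
  ring

/-- If `X 1, …, X r` are mutually independent with `X τ ~ N(μ, σ²/(τλ))` and
`μ̂ = Σ_{τ=1}^r (2τ/(r(r+1))) X τ`, then for every `ε > 0`,
`P(|μ̂ − μ| ≥ ε) ≤ 2 exp(−ε² λ r (r+1) / (4σ²))`.
(The variables are indexed by `i : Fin r`, with `X i` playing the role of `X_{τ}` for
`τ = i + 1`.) -/
theorem weighted_mean_tail_bound
    {Ω : Type*} [MeasurableSpace Ω] (P : Measure Ω) [IsProbabilityMeasure P]
    (μ σ : ℝ) (hσ : 0 < σ) (lam r : ℕ) (hlam : 0 < lam) (hr : 1 ≤ r)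
    (X : Fin r → Ω → ℝ)
    (hXmeas : ∀ i, Measurable (X i))
    (hXdist : ∀ i : Fin r, P.map (X i) =
      gaussianReal μ (Real.toNNReal (σ ^ 2 / (((i : ℕ) + 1 : ℝ) * (lam : ℝ)))))
    (hXindep : iIndepFun X P)
    (muhat : Ω → ℝ)
    (hmuhat : ∀ ω, muhat ω = ∑ i : Fin r,
        (2 * ((i : ℕ) + 1 : ℝ) / ((r : ℝ) * ((r : ℝ) + 1))) * X i ω)
    (ε : ℝ) (hε : 0 < ε) :
    P {ω | ε ≤ |muhat ω - μ|} ≤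
      ENNReal.ofReal (2 * Real.exp (-(ε ^ 2 * (lam : ℝ) * (r : ℝ) * ((r : ℝ) + 1)) / (4 * σ ^ 2))) :=
  weighted_mean_tail_bound_general P μ σ lam r hr X hXmeas hXdist hXindep muhat hmuhat ε hε
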